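/- arXiv:2011.13245 — 5 statements merged into one kernel-verified Lean document; each statement's English description precedes it below -/
import Mathlib

section
/- For a nonnegative integer m and a nonnegative integer k, the binomial coefficients C(m, 2^i) are even for all i = 0, 1, ..., k if and only if 2^(k+1) divides m. -/
/-!
By Lucas' theorem, `C(m, p^i) ≡ ⌊m / p^i⌋ (mod p)`: the `p`-adic digits of `p^i` are all `0`
except a `1` in position `i`. So `p` divides `C(m, p^i)` exactly when the `i`-th digit of `m`
vanishes, and the digits `0, …, k` of `m` all vanish exactly when `p^(k+1) ∣ m`.
-/

namespace Nat

theorem choose_prime_pow_modEq_div {p : ℕ} [Fact p.Prime] (n i : ℕ) :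
    n.choose (p ^ i) ≡ n / p ^ i [MOD p] := by
  induction i generalizing n with
  | zero => simp [ModEq.refl]
  | succ i ih =>
    have hp : 0 < p := (Fact.out : p.Prime).pos
    calc n.choose (p ^ (i + 1))
        ≡ (n % p).choose (p ^ (i + 1) % p) * (n / p).choose (p ^ (i + 1) / p) [MOD p] :=
          Choose.choose_modEq_choose_mod_mul_choose_div_nat
      _ = (n / p).choose (p ^ i) := by
          rw [pow_succ, Nat.mul_mod_left, Nat.mul_div_cancel _ hp, choose_zero_right, one_mul]
      _ ≡ n / p / p ^ i [MOD p] := ih (n / p)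
      _ = n / p ^ (i + 1) := by rw [Nat.div_div_eq_div_mul, ← pow_succ']

theorem prime_dvd_choose_pow_iff {p : ℕ} [Fact p.Prime] (n i : ℕ) :
    p ∣ n.choose (p ^ i) ↔ p ∣ n / p ^ i :=
  (choose_prime_pow_modEq_div n i).dvd_iff dvd_rfl

theorem pow_succ_dvd_iff_dvd_div (p k n : ℕ) :
    p ^ (k + 1) ∣ n ↔ p ^ k ∣ n ∧ p ∣ n / p ^ k := by
  constructor
  · intro h
    have hk : p ^ k ∣ n := (pow_dvd_pow p k.le_succ).trans h
    exact ⟨hk, (dvd_div_iff_mul_dvd hk).2 (pow_succ p k ▸ h)⟩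
  · rintro ⟨hk, hdiv⟩
    exact pow_succ p k ▸ mul_dvd_of_dvd_div hk hdiv

theorem forall_le_dvd_div_pow_iff (p k n : ℕ) :
    (∀ i ≤ k, p ∣ n / p ^ i) ↔ p ^ (k + 1) ∣ n := by
  induction k with
  | zero => simp
  | succ k ih =>
    rw [pow_succ_dvd_iff_dvd_div p (k + 1), ← ih]
    constructor
    · intro h
      exact ⟨fun i hi => h i (hi.trans k.le_succ), h (k + 1) le_rfl⟩
    · rintro ⟨hle, hk⟩ i hi
      rcases Nat.le_succ_iff.1 hi with hi | rfl
      exacts [hle i hi, hk]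

end Nat

theorem binom_pow_two_even_iff (m k : ℕ) :
    (∀ i ≤ k, 2 ∣ Nat.choose m (2 ^ i)) ↔ 2 ^ (k + 1) ∣ m := by
  have : Fact (Nat.Prime 2) := ⟨Nat.prime_two⟩
  simp only [Nat.prime_dvd_choose_pow_iff]
  exact Nat.forall_le_dvd_div_pow_iff 2 k m
end

section
/- Let m10, m01, m11 be nonnegative integers with 2^(r-2) dividing each of m10, m01, m11 (for some r ≥ 2). Consider the polynomial f(t1,t2) = (1+t1)^m10 · (1+t2)^m01 · (1+t1+t2)^m11 over the field F_2. Then for every i with 0 ≤ i ≤ 2^(r-1) and i not in {0, 2^(r-2), 2^(r-1)}, the coefficient of t1^i · t2^(2^(r-1)-i) in f is zero. -/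
/-! With `q = 2 ^ (r - 2)`, the divisibility hypotheses make `f` a `q`-th power, and in
characteristic 2 the Frobenius gives `g ^ q = g (t₁ ^ q, t₂ ^ q)`. So every exponent of `t₁`
occurring in `f` is a multiple of `q`, and the only multiples of `q` in `[0, 2q]` are `0, q, 2q`. -/

open MvPolynomial

theorem MvPolynomial.coeff_pow_expChar_pow_of_not_dvd {σ R : Type*} [CommSemiring R] (p : ℕ)
    [ExpChar R p] (φ : MvPolynomial σ R) (n : ℕ) {m : σ →₀ ℕ} {j : σ} (h : ¬ p ^ n ∣ m j) :
    (φ ^ p ^ n).coeff m = 0 := by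
  rw [← map_iterateFrobenius_expand, coeff_map, coeff_expand_of_not_dvd _ h, map_zero]

theorem Nat.eq_zero_or_eq_or_eq_two_mul_of_dvd_of_le {q i : ℕ} (hdvd : q ∣ i) (hi : i ≤ 2 * q) :
    i = 0 ∨ i = q ∨ i = 2 * q := by
  obtain ⟨k, rfl⟩ := hdvd
  rcases Nat.eq_zero_or_pos q with rfl | hq
  · simp
  have hk : k ≤ 2 := Nat.le_of_mul_le_mul_left (by rwa [mul_comm 2] at hi) hq
  interval_cases k <;> simp [mul_comm]

theorem coeff_vanish_off_special (m10 m01 m11 r : ℕ) (hr : 2 ≤ r)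
    (h10 : 2 ^ (r - 2) ∣ m10) (h01 : 2 ^ (r - 2) ∣ m01) (h11 : 2 ^ (r - 2) ∣ m11)
    (f : MvPolynomial (Fin 2) (ZMod 2))
    (hf : f = (1 + MvPolynomial.X 0) ^ m10 * (1 + MvPolynomial.X 1) ^ m01 *
      (1 + MvPolynomial.X 0 + MvPolynomial.X 1) ^ m11)
    (i : ℕ) (hi : i ≤ 2 ^ (r - 1)) (hi0 : i ≠ 0) (hi1 : i ≠ 2 ^ (r - 2))
    (hi2 : i ≠ 2 ^ (r - 1)) :
    MvPolynomial.coeff (Finsupp.single 0 i + Finsupp.single 1 (2 ^ (r - 1) - i)) f = 0 := by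
  have h2q : 2 ^ (r - 1) = 2 * 2 ^ (r - 2) := by rw [← pow_succ']; congr 1; omega
  have hndvd : ¬ 2 ^ (r - 2) ∣ i := fun hdvd => by
    rcases Nat.eq_zero_or_eq_or_eq_two_mul_of_dvd_of_le hdvd (h2q ▸ hi) with h | h | h
    exacts [hi0 h, hi1 h, hi2 (h2q ▸ h)]
  obtain ⟨a, rfl⟩ := h10
  obtain ⟨b, rfl⟩ := h01
  obtain ⟨c, rfl⟩ := h11
  rw [hf, pow_mul', pow_mul', pow_mul', ← mul_pow, ← mul_pow]
  exact coeff_pow_expChar_pow_of_not_dvd 2 _ _ (j := 0) (by simpa using hndvd)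
end

section
/- Let m10, m01, m11 be nonnegative integers each divisible by 2^(r-2) (for some r ≥ 2), and let f(t1,t2) = (1+t1)^m10 · (1+t2)^m01 · (1+t1+t2)^m11 over F_2. Then the coefficient of t1^(2^(r-2)) · t2^(2^(r-2)) in f is congruent mod 2 to C(m10+m01, 2^(r-1)) + C(m10+m11, 2^(r-1)) + C(m01+m11, 2^(r-1)). -/
/-!
Write `m₁₀, m₀₁, m₁₁ = 2^(r-2) • (A, B, C)`. By Frobenius, `f` is
`g = (1+X₀)^A (1+X₁)^B (1+X₀+X₁)^C` with every `Xᵢ` replaced by `Xᵢ^(2^(r-2))`, so the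
coefficient in question is the `X₀X₁`-coefficient of `g`. That coefficient is the
`T²`-coefficient of `g(T,T)` minus those of `g(T,0)` and `g(0,T)`; over `𝔽₂` these
specialisations are `(1+T)^(A+B)`, `(1+T)^(A+C)`, `(1+T)^(B+C)` because `T + T = 0`.
Lucas' congruence `C(2^k a, 2^k b) ≡ C(a, b)` then rescales the three binomial coefficients.
-/

open MvPolynomial

theorem MvPolynomial.coeff_single_add_single_eq_coeff_two_aeval {R : Type*} [CommRing R]
    (φ : MvPolynomial (Fin 2) R) :
    φ.coeff (Finsupp.single 0 1 + Finsupp.single 1 1) =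
      (aeval ![Polynomial.X, Polynomial.X] φ).coeff 2 - (aeval ![Polynomial.X, 0] φ).coeff 2 -
        (aeval ![0, Polynomial.X] φ).coeff 2 := by
  induction φ using MvPolynomial.induction_on' with
  | monomial d r =>
    have hd : d = Finsupp.single 0 1 + Finsupp.single 1 1 ↔ d 0 = 1 ∧ d 1 = 1 := by
      constructor
      · rintro rfl; simp
      · rintro ⟨h0, h1⟩
        ext i; fin_cases i <;> simp [h0, h1]
    simp only [coeff_monomial, hd, aeval_monomial, Finsupp.prod_fintype _ _ (fun _ => pow_zero _),
      Fin.prod_univ_two, Matrix.cons_val_zero, Matrix.cons_val_one, ← pow_add, zero_pow_eq,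
      Polynomial.algebraMap_apply, Polynomial.coeff_C_mul, mul_ite, mul_one, mul_zero,
      ite_mul, one_mul, zero_mul, Algebra.algebraMap_self, RingHom.id_apply, Polynomial.coeff_X_pow,
      apply_ite (Polynomial.coeff · 2), Polynomial.coeff_zero]
    split_ifs <;> first | (exfalso; omega) | simp
  | add φ ψ hφ hψ => simp only [coeff_add, map_add, Polynomial.coeff_add, hφ, hψ]; ring

theorem MvPolynomial.expand_prime_pow_eq_pow_zmod {σ : Type*} {p : ℕ} [Fact p.Prime] (n : ℕ)
    (φ : MvPolynomial σ (ZMod p)) : expand (p ^ n) φ = φ ^ p ^ n := by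
  have hid : iterateFrobenius (ZMod p) p n = RingHom.id _ := by
    ext x
    exact ZMod.pow_card_pow x
  rw [← map_iterateFrobenius_expand, hid, map_id]

theorem ZMod.natCast_choose_prime_pow_mul {p : ℕ} [Fact p.Prime] (k a b : ℕ) :
    ((p ^ k * a).choose (p ^ k * b) : ZMod p) = a.choose b :=
  (ZMod.natCast_eq_natCast_iff _ _ _).mpr Choose.choose_pow_mul_pow_mul_modEq_choose_nat

theorem coeff_single_add_single_prod_one_add_pow_zmod_two (A B C : ℕ) :
    ((1 + X 0) ^ A * (1 + X 1) ^ B * (1 + X 0 + X 1) ^ C : MvPolynomial (Fin 2) (ZMod 2)).coeff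
        (Finsupp.single 0 1 + Finsupp.single 1 1) =
      (A + B).choose 2 + (A + C).choose 2 + (B + C).choose 2 := by
  have hXX : (1 + Polynomial.X + Polynomial.X : Polynomial (ZMod 2)) = 1 := by
    rw [add_assoc, CharTwo.add_self_eq_zero, add_zero]
  rw [MvPolynomial.coeff_single_add_single_eq_coeff_two_aeval]
  simp [hXX, ← pow_add, Polynomial.coeff_one_add_X_pow, CharTwo.sub_eq_add]

theorem coeff_middle_term (m10 m01 m11 r : ℕ) (hr : 2 ≤ r)
    (h10 : 2 ^ (r - 2) ∣ m10) (h01 : 2 ^ (r - 2) ∣ m01) (h11 : 2 ^ (r - 2) ∣ m11)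
    (f : MvPolynomial (Fin 2) (ZMod 2))
    (hf : f = (1 + MvPolynomial.X 0) ^ m10 * (1 + MvPolynomial.X 1) ^ m01 *
      (1 + MvPolynomial.X 0 + MvPolynomial.X 1) ^ m11) :
    MvPolynomial.coeff (Finsupp.single 0 (2 ^ (r - 2)) + Finsupp.single 1 (2 ^ (r - 2))) f =
      ((Nat.choose (m10 + m01) (2 ^ (r - 1)) + Nat.choose (m10 + m11) (2 ^ (r - 1)) +
        Nat.choose (m01 + m11) (2 ^ (r - 1)) : ℕ) : ZMod 2) := by
  obtain ⟨A, rfl⟩ := h10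
  obtain ⟨B, rfl⟩ := h01
  obtain ⟨C, rfl⟩ := h11
  have hf_expand :
      f = expand (2 ^ (r - 2)) ((1 + X 0) ^ A * (1 + X 1) ^ B * (1 + X 0 + X 1) ^ C) := by
    rw [hf, expand_prime_pow_eq_pow_zmod]
    ring
  have hdeg : (Finsupp.single 0 (2 ^ (r - 2)) + Finsupp.single 1 (2 ^ (r - 2)) : Fin 2 →₀ ℕ) =
      2 ^ (r - 2) • (Finsupp.single 0 1 + Finsupp.single 1 1) := by
    simp [smul_add]
  have hexp : 2 ^ (r - 1) = 2 ^ (r - 2) * 2 := by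
    rw [← pow_succ]
    congr 1
    omega
  rw [hf_expand, hdeg, coeff_expand_smul _ (by positivity),
    coeff_single_add_single_prod_one_add_pow_zmod_two, hexp, ← mul_add, ← mul_add, ← mul_add]
  simp only [Nat.cast_add, ZMod.natCast_choose_prime_pow_mul]
end

section
/- Let a, b be nonnegative integers and r a positive integer with 2^(r-1) dividing both a and b. Then C(a, 2^(r-2))·C(b, 2^(r-2)) ≡ C(a+b, 2^(r-1)) mod 2 (for r ≥ 2). -/
/-! Writing `a = 2 ^ k * a'` and `b = 2 ^ k * b'` with `k = r - 2`, Lucas's theorem gives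
`C(2 ^ k * m, 2 ^ k * n) ≡ C(m, n) mod 2`, which reduces the claim to the exact identity
`C(a' + b', 2) = C(a', 2) + C(b', 2) + a' * b'`. -/

theorem Nat.add_choose_two (m n : ℕ) :
    (m + n).choose 2 = m.choose 2 + n.choose 2 + m * n := by
  rw [Nat.add_choose_eq,
    show Finset.HasAntidiagonal.antidiagonal 2 = {(0, 2), (1, 1), (2, 0)} from rfl,
    Finset.sum_insert (by decide), Finset.sum_insert (by decide), Finset.sum_singleton]
  simp only [Nat.choose_zero_right, Nat.choose_one_right]
  ring

theorem vandermonde_pow_two_mod_two (a b r : ℕ) (hr : 2 ≤ r)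
    (ha : 2 ^ (r - 2) ∣ a) (hb : 2 ^ (r - 2) ∣ b) :
    Nat.choose (a + b) (2 ^ (r - 1)) % 2 =
      (Nat.choose a (2 ^ (r - 1)) + Nat.choose b (2 ^ (r - 1)) +
        Nat.choose a (2 ^ (r - 2)) * Nat.choose b (2 ^ (r - 2))) % 2 := by
  obtain ⟨a', rfl⟩ := ha
  obtain ⟨b', rfl⟩ := hb
  set k := r - 2
  have hpow : 2 ^ (r - 1) = 2 ^ k * 2 := by rw [← pow_succ]; congr 1; omega
  have lucas (m n : ℕ) : (2 ^ k * m).choose (2 ^ k * n) ≡ m.choose n [MOD 2] :=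
    Choose.choose_pow_mul_pow_mul_modEq_choose_nat
  have lucas_one (m : ℕ) : (2 ^ k * m).choose (2 ^ k) ≡ m [MOD 2] := by
    simpa using lucas m 1
  rw [hpow, ← mul_add]
  calc (2 ^ k * (a' + b')).choose (2 ^ k * 2)
      ≡ (a' + b').choose 2 [MOD 2] := lucas _ _
    _ = a'.choose 2 + b'.choose 2 + a' * b' := Nat.add_choose_two a' b'
    _ ≡ _ [MOD 2] :=
      ((lucas a' 2).symm.add (lucas b' 2).symm).add ((lucas_one a').symm.mul (lucas_one b').symm)
end

section
/- Let G = GL_2(F_q) with q odd, and let B be the Borel subgroup of upper triangular matrices. The transfer (verlagerung) map ver_{G/B}: G/[G,G] → B/[B,B] sends the class of g to the class of the scalar matrix diag(det g, det g). -/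
/-!
Over a field with a unit `u ≠ 1`, conjugating a transvection by `diag(u, 1)` rescales it, so every
transvection is killed by any homomorphism to an abelian group. Since transvections and invertible
diagonal matrices generate `GL n F`, each `g` has a diagonal `D` on which all such homomorphisms
take their value at `g`; taking the determinant, `det D = det g`.

For the transfer to the Borel subgroup it remains to treat `diag(a, d)`. Take the coset
representatives `w = !![0, 1; 1, 0]` and `!![1, 0; c, 1]` for `c ∈ F`: `diag(a, d)` fixes the coset
of `w` with factor `diag(d, a)` and permutes the `q` others, each with factor `diag(a, d)`. The
transfer is the class of `diag(d a^q, a d^q) = diag(ad, ad)`.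
-/

open Matrix

universe u

namespace MonoidHom

variable {G A ι : Type*} [Group G] [CommGroup A] [Fintype ι] {H : Subgroup G} [H.FiniteIndex]

theorem transfer_eq_prod_of_mul_eq (ϕ : H →* A) {r : ι → G}
    (hr : Function.Bijective fun i ↦ (r i : G ⧸ H)) (g : G) (σ : ι → ι) (b : ι → H)
    (hb : ∀ i, g * r (σ i) = r i * b i) : ϕ.transfer g = ∏ i, ϕ (b i) := by
  let e := Equiv.ofBijective _ hr
  have he : ∀ q, ((r (e.symm q) : G) : G ⧸ H) = q := e.apply_symm_apply
  have hσ : ∀ i, g⁻¹ • e i = e (σ i) := fun i ↦ by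
    simp [e, QuotientGroup.eq, mul_assoc, hb]
  let := H.fintypeQuotientOfFiniteIndex
  rw [transfer_def ϕ ⟨_, Subgroup.isComplement_range_left he⟩ g, Subgroup.leftTransversals.diff,
    ← e.prod_comp]
  refine Finset.prod_congr rfl fun i _ ↦ congr_arg ϕ (Subtype.ext ?_)
  rw [Subgroup.coe_mk, Subgroup.smul_apply_eq_smul_apply_inv_smul,
    Subgroup.IsComplement.leftQuotientEquiv_apply he,
    Subgroup.IsComplement.leftQuotientEquiv_apply he, hσ]
  simp [e, hb]

end MonoidHom

lemma FiniteField.nontrivial_units_of_odd_card {F : Type*} [Field F] [Fintype F]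
    (h : Odd (Fintype.card F)) : Nontrivial Fˣ := by
  classical
  have h2 : Fintype.card F ≠ 2 := fun h2 ↦ by rw [h2] at h; exact (by decide : ¬Odd 2) h
  have := Fintype.one_lt_card (α := F)
  rw [← Fintype.one_lt_card_iff_nontrivial, Fintype.card_units]
  omega

namespace Matrix.GeneralLinearGroup

section Diagonal

variable {n R : Type*} [Fintype n] [DecidableEq n] [CommRing R]

def diagonal : (n → Rˣ) →* GL n R :=
  (Units.map (diagonalRingHom n R).toMonoidHom).comp MulEquiv.piUnits.symm.toMonoidHom

@[simp]
lemma coe_diagonal (d : n → Rˣ) :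
    (diagonal d : Matrix n n R) = Matrix.diagonal (fun i ↦ (d i : R)) :=
  rfl

@[simp]
lemma det_diagonal (d : n → Rˣ) : det (diagonal d) = ∏ i, d i := by
  ext; simp

lemma diagonal_mulSingle_mul_transvection {i j : n} (hij : i ≠ j) (u : Rˣ) (b : R) :
    diagonal (Pi.mulSingle i u) * SpecialLinearGroup.toGL (SpecialLinearGroup.transvection hij b) =
      SpecialLinearGroup.toGL (SpecialLinearGroup.transvection hij (u * b)) *
        diagonal (Pi.mulSingle i u) := by
  ext k l
  simp only [Units.val_mul, coe_diagonal, SpecialLinearGroup.coe_GL_coe_matrix,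
    SpecialLinearGroup.transvection_coe, diagonal_mul, mul_diagonal]
  by_cases hk : k = i <;> by_cases hl : l = i <;> by_cases hjl : j = l <;>
    simp_all [one_apply, eq_comm, mul_comm]

variable {F : Type*} [Field F] [Nontrivial Fˣ]

lemma map_transvection_eq_one {A : Type*} [CommGroup A] (φ : GL n F →* A) {i j : n}
    (hij : i ≠ j) (b : F) :
    φ (SpecialLinearGroup.transvection hij b) = 1 := by
  obtain ⟨u, hu⟩ := exists_ne (1 : Fˣ)
  have hu' : (u : F) - 1 ≠ 0 := sub_ne_zero.mpr (Units.val_eq_one.not.mpr hu)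
  set c := b / ((u : F) - 1)
  have hconj : φ (SpecialLinearGroup.transvection hij (u * c)) =
      φ (SpecialLinearGroup.transvection hij c) := by
    simpa only [map_mul, mul_comm (φ (diagonal _)), mul_left_inj] using
      (congr_arg φ (diagonal_mulSingle_mul_transvection hij u c)).symm
  have hsplit : (u : F) * c = c + b := by
    simp only [c]
    field_simp
    ring
  rw [hsplit, SpecialLinearGroup.transvection_add, map_mul, map_mul, mul_eq_left] at hconj
  exact hconj

lemma exists_diagonal_map_eq (g : GL n F) :
    ∃ d : n → Fˣ, ∀ {A : Type u} [CommGroup A] (φ : GL n F →* A), φ g = φ (diagonal d) := by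
  let P (M : Matrix n n F) : Prop := ∀ hM : M.det ≠ 0, ∃ d : n → Fˣ,
    ∀ {A : Type u} [CommGroup A] (φ : GL n F →* A), φ (mkOfDetNeZero M hM) = φ (diagonal d)
  suffices hP : P g by
    obtain ⟨d, hd⟩ := hP g.det_ne_zero
    exact ⟨d, fun φ ↦ (congr_arg φ (Units.ext rfl : g = mkOfDetNeZero g _)).trans (hd φ)⟩
  refine diagonal_transvection_induction_of_det_ne_zero P g g.det_ne_zero ?_ ?_ ?_
  · intro D _ hD
    have hD' : ∀ i, D i ≠ 0 := by simpa [Finset.prod_ne_zero_iff] using hD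
    exact ⟨fun i ↦ Units.mk0 (D i) (hD' i), fun φ ↦ congr_arg φ (Units.ext (by simp))⟩
  · refine fun t _ ↦ ⟨1, fun φ ↦ ?_⟩
    rw [map_one, map_one, ← map_transvection_eq_one φ t.hij t.c]
    exact congr_arg φ (Units.ext rfl)
  · intro M N hM hN hPM hPN _
    obtain ⟨dM, hdM⟩ := hPM hM
    obtain ⟨dN, hdN⟩ := hPN hN
    refine ⟨dM * dN, fun φ ↦ ?_⟩
    rw [map_mul, map_mul, ← hdM, ← hdN, ← map_mul]
    exact congr_arg φ (Units.ext rfl)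

end Diagonal

section Borel

variable {F : Type*} [Field F]

def borelCosetRep : Option F → GL (Fin 2) F
  | none => mkOfDetNeZero !![0, 1; 1, 0] (by simp)
  | some c => mkOfDetNeZero !![1, 0; c, 1] (by simp)

variable {B : Subgroup (GL (Fin 2) F)}
  (hB : ∀ g : GL (Fin 2) F, g ∈ B ↔ (g : Matrix (Fin 2) (Fin 2) F) 1 0 = 0)
include hB

lemma diagonal_mem_borel (d : Fin 2 → Fˣ) : diagonal d ∈ B := by
  simp [hB]

def diagonalBorel : (Fin 2 → Fˣ) →* B :=
  diagonal.codRestrict B (diagonal_mem_borel hB)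

lemma mk_eq_mk_iff_borel (g g' : GL (Fin 2) F) :
    (g : GL (Fin 2) F ⧸ B) = g' ↔
      (g : Matrix (Fin 2) (Fin 2) F) 0 0 * (g' : Matrix (Fin 2) (Fin 2) F) 1 0 =
        (g : Matrix (Fin 2) (Fin 2) F) 1 0 * (g' : Matrix (Fin 2) (Fin 2) F) 0 0 := by
  rw [QuotientGroup.eq, hB, Units.val_mul, coe_units_inv, inv_def, smul_mul, smul_apply,
    adjugate_fin_two, mul_apply, Fin.sum_univ_two]
  simp [g.det_ne_zero, neg_add_eq_sub, sub_eq_zero]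

lemma borelCosetRep_bijective :
    Function.Bijective fun x : Option F ↦ (borelCosetRep x : GL (Fin 2) F ⧸ B) := by
  refine ⟨fun x y hxy ↦ ?_, fun q ↦ ?_⟩
  · rw [mk_eq_mk_iff_borel hB] at hxy
    cases x <;> cases y <;> simp_all [borelCosetRep]
  · obtain ⟨g, rfl⟩ := QuotientGroup.mk_surjective q
    by_cases hg : (g : Matrix (Fin 2) (Fin 2) F) 0 0 = 0
    · exact ⟨none, by simp [mk_eq_mk_iff_borel hB, borelCosetRep, hg]⟩
    · refine ⟨some ((g : Matrix (Fin 2) (Fin 2) F) 1 0 / (g : Matrix (Fin 2) (Fin 2) F) 0 0), ?_⟩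
      simp [mk_eq_mk_iff_borel hB, borelCosetRep, hg]

theorem transfer_diagonal_borel [Fintype F] [B.FiniteIndex] (d : Fin 2 → Fˣ) :
    (Abelianization.of : B →* Abelianization B).transfer (diagonal d) =
      Abelianization.of (diagonalBorel hB fun _ ↦ d 0 * d 1) := by
  let σ : Option F → Option F := Option.map fun c ↦ d 0 / d 1 * c
  let b : Option F → B := fun x ↦
    x.elim (diagonalBorel hB (d ∘ Equiv.swap 0 1)) fun _ ↦ diagonalBorel hB d
  rw [MonoidHom.transfer_eq_prod_of_mul_eq _ (borelCosetRep_bijective hB) _ σ b ?_]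
  · simp only [Fintype.prod_option, b, Option.elim_none, Option.elim_some]
    rw [Finset.prod_const, Finset.card_univ, ← map_pow, ← map_mul, ← map_pow, ← map_mul]
    congr 2
    funext i
    fin_cases i <;> ext <;> simp [FiniteField.pow_card, mul_comm]
  · rintro (_ | c) <;> ext i j <;> fin_cases i <;> fin_cases j <;>
      simp [borelCosetRep, σ, b, diagonalBorel]
    field_simp

end Borel

end Matrix.GeneralLinearGroup

theorem transfer_GL2_to_Borel_general (F : Type*) [Field F] [Fintype F]
    (hodd : Odd (Fintype.card F))
    (B : Subgroup (GL (Fin 2) F)) [B.FiniteIndex]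
    (hB : ∀ g : GL (Fin 2) F, g ∈ B ↔ (g : Matrix (Fin 2) (Fin 2) F) 1 0 = 0)
    (g : GL (Fin 2) F) (z : B)
    (hz : ((z : GL (Fin 2) F) : Matrix (Fin 2) (Fin 2) F) =
      Matrix.scalar (Fin 2) ((Matrix.GeneralLinearGroup.det g : Fˣ) : F)) :
    MonoidHom.transfer (Abelianization.of (G := B)) g = Abelianization.of z := by
  have := FiniteField.nontrivial_units_of_odd_card hodd
  obtain ⟨d, hd⟩ := Matrix.GeneralLinearGroup.exists_diagonal_map_eq g
  have hdet : Matrix.GeneralLinearGroup.det g = d 0 * d 1 := by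
    rw [hd, Matrix.GeneralLinearGroup.det_diagonal, Fin.prod_univ_two]
  rw [hd, Matrix.GeneralLinearGroup.transfer_diagonal_borel hB]
  congr 1
  ext i j
  simp [hz, hdet, Matrix.GeneralLinearGroup.diagonalBorel]

theorem transfer_GL2_to_Borel (F : Type*) [Field F] [Fintype F] [DecidableEq F]
    (hodd : Odd (Fintype.card F))
    (B : Subgroup (GL (Fin 2) F)) [B.FiniteIndex]
    (hB : ∀ g : GL (Fin 2) F, g ∈ B ↔ (g : Matrix (Fin 2) (Fin 2) F) 1 0 = 0)
    (g : GL (Fin 2) F) (z : B)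
    (hz : ((z : GL (Fin 2) F) : Matrix (Fin 2) (Fin 2) F) =
      Matrix.scalar (Fin 2) ((Matrix.GeneralLinearGroup.det g : Fˣ) : F)) :
    MonoidHom.transfer (Abelianization.of (G := B)) g = Abelianization.of z :=
  transfer_GL2_to_Borel_general F hodd B hB g z hz
end
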